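/- Let d, T be positive integers and let y_1, ..., y_T be vectors in ℝ^d with ‖y_t‖₂ ≤ 1 for all t. Define U_0 = I_d and U_t = U_{t-1} + y_t y_tᵀ for t ≥ 1. Then ∑_{t=1}^{T} √(y_tᵀ U_{t-1}^{-1} y_t) ≤ √(2 T ln(det(U_T))) ≤ √(2 d T ln(1 + T/d)). -/

import Mathlib

open Matrix BigOperators

/-!
Write `x_t = y_tᵀ U_t⁻¹ y_t`. By the matrix determinant lemma `det U_{t+1} = det U_t (1 + x_t)`,
so `log det U_T = ∑ log (1 + x_t)` telescopes. Since `U_t ≥ I` we have `0 ≤ x_t ≤ ‖y_t‖² ≤ 1`,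
and `x ≤ 2 log (1 + x)` on `[0, 2]`; hence `∑ x_t ≤ 2 log det U_T`, and Cauchy–Schwarz gives the
first inequality. For the second, AM–GM on the eigenvalues bounds `det U_T` by `(tr U_T / d)^d`,
and `tr U_T = d + ∑ ‖y_t‖² ≤ d + T`.
-/

theorem Matrix.det_add_vecMulVec {m α : Type*} [Fintype m] [DecidableEq m] [CommRing α]
    {A : Matrix m m α} (hA : IsUnit A.det) (u v : m → α) :
    (A + vecMulVec u v).det = A.det * (1 + v ⬝ᵥ A⁻¹ *ᵥ u) := by
  rw [vecMulVec_eq Unit, det_add_replicateCol_mul_replicateRow hA, Matrix.mul_assoc,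
    ← replicateCol_mulVec, det_unique (n := Unit), add_apply, one_apply_eq,
    replicateRow_mul_replicateCol_apply]

theorem Fin.sum_univ_sub {M : Type*} [AddCommGroup M] (f : ℕ → M) (T : ℕ) :
    ∑ t : Fin T, (f (t + 1) - f t) = f T - f 0 := by
  rw [Fin.sum_univ_eq_sum_range (fun t => f (t + 1) - f t), Finset.sum_range_sub]

theorem Real.le_two_mul_log_one_add {x : ℝ} (h0 : 0 ≤ x) (h2 : x ≤ 2) :
    x ≤ 2 * Real.log (1 + x) := by
  have h := Real.le_log_one_add_of_nonneg h0
  rw [div_le_iff₀ (by linarith)] at h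
  nlinarith

namespace Matrix

theorem PosDef.of_posSemidef_sub_one {n : Type*} [DecidableEq n] {A : Matrix n n ℝ}
    (hA : (A - 1).PosSemidef) : A.PosDef := by
  simpa using PosDef.one.add_posSemidef hA

variable {n : Type*} [Fintype n] [DecidableEq n]

theorem PosDef.log_det_le {A : Matrix n n ℝ} (hA : A.PosDef) :
    Real.log A.det ≤ Fintype.card n * Real.log (A.trace / Fintype.card n) := by
  rcases isEmpty_or_nonempty n with _ | _
  · simp [det_isEmpty]
  have hcard : (0 : ℝ) < Fintype.card n := by exact_mod_cast Fintype.card_pos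
  have hjensen := strictConcaveOn_log_Ioi.concaveOn.le_map_sum (t := Finset.univ)
    (w := fun _ => (Fintype.card n : ℝ)⁻¹) (p := hA.1.eigenvalues)
    (fun _ _ => by positivity) (by simp [hcard.ne']) (fun i _ => hA.eigenvalues_pos i)
  rw [hA.1.det_eq_prod_eigenvalues, hA.1.trace_eq_sum_eigenvalues]
  simp only [RCLike.ofReal_real_eq_id, id, smul_eq_mul, ← Finset.mul_sum] at hjensen ⊢
  rw [Real.log_prod fun i _ => (hA.eigenvalues_pos i).ne', div_eq_inv_mul]
  rwa [inv_mul_le_iff₀ hcard] at hjensen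

theorem PosDef.dotProduct_inv_mulVec_nonneg {A : Matrix n n ℝ} (hA : A.PosDef) (y : n → ℝ) :
    0 ≤ y ⬝ᵥ A⁻¹ *ᵥ y := by
  simpa using hA.inv.posSemidef.dotProduct_mulVec_nonneg y

theorem dotProduct_inv_mulVec_le {A : Matrix n n ℝ} (hA : (A - 1).PosSemidef) (y : n → ℝ) :
    y ⬝ᵥ A⁻¹ *ᵥ y ≤ y ⬝ᵥ y := by
  -- `z ⬝ᵥ z ≤ z ⬝ᵥ A *ᵥ z = y ⬝ᵥ z`, then Cauchy–Schwarz.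
  set z := A⁻¹ *ᵥ y
  have hAz : A *ᵥ z = y := by
    rw [mulVec_mulVec, mul_nonsing_inv _ (PosDef.of_posSemidef_sub_one hA).det_pos.ne'.isUnit,
      one_mulVec]
  have hzz : z ⬝ᵥ z ≤ y ⬝ᵥ z := by
    have := hA.dotProduct_mulVec_nonneg z
    rwa [star_trivial, sub_mulVec, one_mulVec, hAz, dotProduct_sub, sub_nonneg,
      dotProduct_comm z y] at this
  have hcs : (y ⬝ᵥ z) ^ 2 ≤ (y ⬝ᵥ y) * (z ⬝ᵥ z) := by
    simpa only [dotProduct, sq] using Finset.sum_mul_sq_le_sq_mul_sq Finset.univ y z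
  have hyy : 0 ≤ y ⬝ᵥ y := by simpa using dotProduct_self_star_nonneg y
  nlinarith [mul_le_mul_of_nonneg_left hzz hyy]

end Matrix

namespace EllipticalPotential

variable {n : Type*} [Fintype n] [DecidableEq n] {T : ℕ} {y : Fin T → n → ℝ}
  {U : ℕ → Matrix n n ℝ}

theorem sub_one_posSemidef (hU0 : U 0 = 1)
    (hUsucc : ∀ t : Fin T, U (t + 1) = U t + vecMulVec (y t) (y t)) :
    ∀ k ≤ T, (U k - 1).PosSemidef
  | 0, _ => by simpa [hU0] using PosSemidef.zero
  | k + 1, hk => by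
    rw [hUsucc ⟨k, hk⟩, add_sub_right_comm]
    simpa using (sub_one_posSemidef hU0 hUsucc k (Nat.le_of_succ_le hk)).add
      (posSemidef_vecMulVec_self_star (y ⟨k, hk⟩))

theorem posDef (hU0 : U 0 = 1)
    (hUsucc : ∀ t : Fin T, U (t + 1) = U t + vecMulVec (y t) (y t)) (t : Fin T) :
    (U t).PosDef :=
  PosDef.of_posSemidef_sub_one (sub_one_posSemidef hU0 hUsucc t t.2.le)

theorem trace_eq_card_add_sum (hU0 : U 0 = 1)
    (hUsucc : ∀ t : Fin T, U (t + 1) = U t + vecMulVec (y t) (y t)) :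
    (U T).trace = Fintype.card n + ∑ t, y t ⬝ᵥ y t := by
  rw [← sub_eq_iff_eq_add', ← trace_one (n := n) (R := ℝ), ← hU0, ← trace_sub,
    ← Fin.sum_univ_sub, trace_sum]
  exact Finset.sum_congr rfl fun t _ => by rw [hUsucc, add_sub_cancel_left, trace_vecMulVec]

theorem log_det_eq_sum_log (hU0 : U 0 = 1)
    (hUsucc : ∀ t : Fin T, U (t + 1) = U t + vecMulVec (y t) (y t)) :
    Real.log (U T).det = ∑ t, Real.log (1 + y t ⬝ᵥ (U t)⁻¹ *ᵥ y t) := by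
  have hpos := posDef hU0 hUsucc
  calc Real.log (U T).det = Real.log (U T).det - Real.log (U 0).det := by simp [hU0]
    _ = ∑ t : Fin T, (Real.log (U (t + 1)).det - Real.log (U t).det) :=
      (Fin.sum_univ_sub (fun k => Real.log (U k).det) T).symm
    _ = ∑ t, Real.log (1 + y t ⬝ᵥ (U t)⁻¹ *ᵥ y t) := by
      refine Finset.sum_congr rfl fun t _ => ?_
      have hx := (hpos t).dotProduct_inv_mulVec_nonneg (y t)
      rw [hUsucc, det_add_vecMulVec (hpos t).det_pos.ne'.isUnit,
        Real.log_mul (hpos t).det_pos.ne' (by positivity), add_sub_cancel_left]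

theorem sum_le_two_mul_log_det (hU0 : U 0 = 1)
    (hUsucc : ∀ t : Fin T, U (t + 1) = U t + vecMulVec (y t) (y t))
    (hy : ∀ t, y t ⬝ᵥ y t ≤ 1) :
    ∑ t, y t ⬝ᵥ (U t)⁻¹ *ᵥ y t ≤ 2 * Real.log (U T).det := by
  rw [log_det_eq_sum_log hU0 hUsucc, Finset.mul_sum]
  refine Finset.sum_le_sum fun t _ => Real.le_two_mul_log_one_add
    ((posDef hU0 hUsucc t).dotProduct_inv_mulVec_nonneg (y t)) ?_
  linarith [(dotProduct_inv_mulVec_le (sub_one_posSemidef hU0 hUsucc t t.2.le) (y t)).trans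
    (hy t)]

theorem log_det_le (hU0 : U 0 = 1)
    (hUsucc : ∀ t : Fin T, U (t + 1) = U t + vecMulVec (y t) (y t))
    (hy : ∀ t, y t ⬝ᵥ y t ≤ 1) :
    Real.log (U T).det ≤ Fintype.card n * Real.log (1 + T / Fintype.card n) := by
  have hsum : ∑ t, y t ⬝ᵥ y t ≤ T := by
    simpa using Finset.sum_le_sum fun t (_ : t ∈ Finset.univ) => hy t
  have hsum0 : 0 ≤ ∑ t, y t ⬝ᵥ y t :=
    Finset.sum_nonneg fun t _ => by simpa using dotProduct_self_star_nonneg (y t)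
  refine (PosDef.of_posSemidef_sub_one (sub_one_posSemidef hU0 hUsucc T le_rfl)).log_det_le.trans
    ?_
  rcases isEmpty_or_nonempty n with _ | _
  · simp
  have hcard : (0 : ℝ) < Fintype.card n := by exact_mod_cast Fintype.card_pos
  rw [trace_eq_card_add_sum hU0 hUsucc, one_add_div hcard.ne']
  gcongr

end EllipticalPotential

theorem sum_sqrt_elliptical_potential_general
    (d T : ℕ)
    (y : Fin T → Fin d → ℝ)
    (hy : ∀ t, Real.sqrt (∑ i, y t i ^ 2) ≤ 1)
    (U : ℕ → Matrix (Fin d) (Fin d) ℝ)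
    (hU0 : U 0 = 1)
    (hUsucc : ∀ t : Fin T, U ((t : ℕ) + 1) = U t + vecMulVec (y t) (y t)) :
    ∑ t : Fin T, Real.sqrt (y t ⬝ᵥ (U t)⁻¹ *ᵥ y t)
      ≤ Real.sqrt (2 * T * Real.log (U T).det) ∧
    Real.sqrt (2 * T * Real.log (U T).det)
      ≤ Real.sqrt (2 * d * T * Real.log (1 + (T : ℝ) / d)) := by
  have hnorm : ∀ t, y t ⬝ᵥ y t ≤ 1 := fun t => by
    simpa [dotProduct, sq] using Real.sqrt_le_one.mp (hy t)
  have hx t := (EllipticalPotential.posDef hU0 hUsucc t).dotProduct_inv_mulVec_nonneg (y t)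
  have hpotential := EllipticalPotential.sum_le_two_mul_log_det hU0 hUsucc hnorm
  have hdet := EllipticalPotential.log_det_le hU0 hUsucc hnorm
  rw [Fintype.card_fin] at hdet
  refine ⟨?_, Real.sqrt_le_sqrt ?_⟩
  · calc ∑ t, √(y t ⬝ᵥ (U t)⁻¹ *ᵥ y t) = ∑ t, √(y t ⬝ᵥ (U t)⁻¹ *ᵥ y t) * √1 := by
          simp
      _ ≤ √(∑ t, y t ⬝ᵥ (U t)⁻¹ *ᵥ y t) * √(∑ _ : Fin T, 1) :=
        Real.sum_sqrt_mul_sqrt_le _ hx fun _ => zero_le_one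
      _ ≤ √(2 * T * Real.log (U T).det) := by
        rw [← Real.sqrt_mul (Finset.sum_nonneg fun t _ => hx t), Finset.sum_const,
          Finset.card_univ, Fintype.card_fin, nsmul_one]
        refine Real.sqrt_le_sqrt ?_
        linarith [mul_le_mul_of_nonneg_right hpotential (Nat.cast_nonneg (α := ℝ) T)]
  · have := mul_le_mul_of_nonneg_left hdet (by positivity : (0 : ℝ) ≤ 2 * T)
    linarith

/-- Cauchy–Schwarz combined with the elliptical potential lemma. -/
theorem sum_sqrt_elliptical_potential
    (d T : ℕ) (hd : 0 < d) (hT : 0 < T)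
    (y : Fin T → Fin d → ℝ)
    (hy : ∀ t, Real.sqrt (∑ i, y t i ^ 2) ≤ 1)
    (U : ℕ → Matrix (Fin d) (Fin d) ℝ)
    (hU0 : U 0 = 1)
    (hUsucc : ∀ t : Fin T, U ((t : ℕ) + 1) = U t + vecMulVec (y t) (y t)) :
    ∑ t : Fin T, Real.sqrt (y t ⬝ᵥ (U t)⁻¹ *ᵥ y t)
      ≤ Real.sqrt (2 * T * Real.log (U T).det) ∧
    Real.sqrt (2 * T * Real.log (U T).det)
      ≤ Real.sqrt (2 * d * T * Real.log (1 + (T : ℝ) / d)) :=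
  sum_sqrt_elliptical_potential_general d T y hy U hU0 hUsucc
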